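/- Let ζ ∈ k be a primitive n-th root of unity and m, t positive divisors of n with n ∤ mt and gcd(t, n/m) = 1, so that N = n/gcd(n, mt) = n/m. Fix an H_n(ζ,m,t)-module-algebra structure (σ, δ) on A = k[u]/(u^n − 1) with σ(u) = ζ·u and δ(u) = γ·u^{t+1} for some nonzero γ ∈ k. If (τ, δ') is an extension of (σ, δ) to a D(H_n(ζ,m,t))-module-algebra structure on A, then there exist an integer d with 0 < d < n and m ≡ −dt (mod n) and a scalar δ₀ ∈ k such that τ(u) = ζ^d·u and δ'(u) = δ₀·u^{n+1−t}; and if moreover 2m ≠ n, then γ·δ₀·(n−t)_{ζ^m} = ζ^{−m} − 1. -/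

import Mathlib

/-!
Since `σ` acts diagonally on the basis `uⁱ` with pairwise distinct eigenvalues `ζⁱ`, every
`σ`-eigenvector is a monomial. The relations `στ = τσ` and `σδ' = ζ^{-t} δ'σ` make `τ u` and
`δ' u` eigenvectors for `ζ` and `ζ^{1-t}`, so `τ u = c u` and `δ' u = δ₀ u^{n+1-t}`; `τ^n = 1`
gives `c = ζ^d`, and `δτ = ζ^m τδ` evaluated at `u` gives `ζ^m c^t = 1`, i.e. `n ∣ m + dt`.
Both skew derivations act on powers of `u` through `q`-symbols, so the relation
`δδ' - δ'δ = τ^t - σ^m` at `u` reads `γ δ₀ ((n+1-t)_q - (t+1)_{q⁻¹}) = q⁻¹ - q` with `q = ζ^m`;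
clearing denominators in these geometric sums, and dividing by `(q - 1)(q⁻¹ - q) ≠ 0`
(this is where `2m ≠ n` enters), yields the stated identity.
-/

/-- The `q`-symbol `(s)_w = 1 + w + w² + ⋯ + w^(s-1)`. -/
def qSym {k : Type*} [Field k] (w : k) (s : ℕ) : k := ∑ i ∈ Finset.range s, w ^ i

/-- An `H_n(ζ,m,t)`-module-algebra structure on `A`, given by the action `σ` of the
grouplike generator `y` and the action `δ` of the `(y^m,1)`-skew primitive `x`;
here `N` is the nilpotency order of `x`. -/
def IsHAction {k A : Type*} [Field k] [CommRing A] [Algebra k A]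
    (n m t N : ℕ) (ζ : k) (σ : A ≃ₐ[k] A) (δ : A →ₗ[k] A) : Prop :=
  σ ^ n = 1 ∧ δ 1 = 0 ∧
  (∀ a c : A, δ (a * c) = (σ ^ m) a * δ c + δ a * c) ∧
  δ ^ N = 0 ∧
  σ.toLinearMap ∘ₗ δ = ζ ^ t • (δ ∘ₗ σ.toLinearMap)

/-- The data of an extension of an `H_n(ζ,m,t)`-module-algebra structure `(σ, δ)` on `A`
to a `D(H_n(ζ,m,t))`-module-algebra structure, given by the action `τ` of the grouplike
`Y` and the action `δ'` of the `(1,Y^t)`-skew primitive `X` of the Drinfel'd double. -/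
def IsDHExtension {k A : Type*} [Field k] [CommRing A] [Algebra k A]
    (n m t N : ℕ) (ζ : k) (σ : A ≃ₐ[k] A) (δ : A →ₗ[k] A)
    (τ : A ≃ₐ[k] A) (δ' : A →ₗ[k] A) : Prop :=
  τ ^ n = 1 ∧ δ' 1 = 0 ∧
  (∀ a c : A, δ' (a * c) = a * δ' c + δ' a * (τ ^ t) c) ∧
  δ' ^ N = 0 ∧
  τ.toLinearMap ∘ₗ δ' = ζ ^ m • (δ' ∘ₗ τ.toLinearMap) ∧
  σ * τ = τ * σ ∧
  δ ∘ₗ τ.toLinearMap = ζ ^ m • (τ.toLinearMap ∘ₗ δ) ∧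
  σ.toLinearMap ∘ₗ δ' = (ζ⁻¹ ^ t) • (δ' ∘ₗ σ.toLinearMap) ∧
  δ ∘ₗ δ' - δ' ∘ₗ δ = (τ ^ t : A ≃ₐ[k] A).toLinearMap - (σ ^ m : A ≃ₐ[k] A).toLinearMap

theorem Module.Basis.eq_repr_smul_of_apply_eq_smul {ι K V : Type*} [Field K] [AddCommGroup V]
    [Module K V] (b : Module.Basis ι K V) {L : V →ₗ[K] V} {g : ι → K}
    (hg : Function.Injective g) (hL : ∀ i, L (b i) = g i • b i) {v : V} {i₀ : ι}
    (hv : L v = g i₀ • v) : v = b.repr v i₀ • b i₀ := by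
  classical
  have hcoord : ∀ i, (b.coord i).comp L = g i • b.coord i := fun i =>
    b.ext fun j => by
      by_cases hij : j = i
      · subst hij; simp [hL]
      · simp [hL, hij]
  have hrepr : b.repr v = Finsupp.single i₀ (b.repr v i₀) := by
    ext i
    by_cases hi : i = i₀
    · subst hi; simp
    · have h := LinearMap.congr_fun (hcoord i) v
      simp only [LinearMap.comp_apply, hv, map_smul, LinearMap.smul_apply, Module.Basis.coord_apply,
        smul_eq_mul] at h
      have : (g i₀ - g i) * b.repr v i = 0 := by rw [sub_mul, h, sub_self]
      rw [Finsupp.single_apply, if_neg (Ne.symm hi)]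
      exact (mul_eq_zero.mp this).resolve_left (sub_ne_zero.mpr (hg.ne (Ne.symm hi)))
  rw [← b.repr_symm_single, ← hrepr, LinearEquiv.symm_apply_apply]

theorem AlgEquiv.pow_apply_of_apply_eq_smul {R A : Type*} [CommSemiring R] [Semiring A]
    [Algebra R A] (σ : A ≃ₐ[R] A) {x : A} {c : R} (hx : σ x = c • x) (j : ℕ) :
    (σ ^ j) x = c ^ j • x := by
  induction j with
  | zero => simp
  | succ j ih => rw [pow_succ', AlgEquiv.mul_apply, ih, map_smul, hx, smul_smul, pow_succ]

theorem map_pow_succ_of_map_mul_eq {k A : Type*} [Field k] [CommRing A] [Algebra k A]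
    {D φ : A → A} (hD : ∀ a c, D (a * c) = φ a * D c + D a * c) {x : A} {q : k}
    (hφ : φ x = q • x) (a : ℕ) : D (x ^ (a + 1)) = qSym q (a + 1) • (x ^ a * D x) := by
  induction a with
  | zero => simp [qSym]
  | succ a ih =>
    rw [pow_succ', hD, hφ, ih, show qSym q (a + 1 + 1) = q * qSym q (a + 1) + 1 from geom_sum_succ]
    simp only [Algebra.smul_def, map_add, map_mul, map_one]
    ring

theorem IsPrimitiveRoot.pow_ne_neg_one {R : Type*} [CommRing R] {ζ : R} {n m : ℕ}
    (hζ : IsPrimitiveRoot ζ n) (hm0 : 0 < m) (hmn : m < n) (h2m : 2 * m ≠ n) : ζ ^ m ≠ -1 := by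
  intro h
  obtain ⟨e, he⟩ : n ∣ 2 * m :=
    (hζ.pow_eq_one_iff_dvd _).mp (by rw [mul_comm, pow_mul, h, neg_one_sq])
  have : e < 2 := by
    by_contra! hc
    nlinarith [Nat.mul_le_mul_left n hc]
  interval_cases e <;> omega

theorem mul_qSym_sub_eq_inv_sub_one {k : Type*} [Field k] {q c : k} {n t : ℕ} (hn : n ≠ 0)
    (hqn : q ^ n = 1) (hq1 : q ≠ 1) (hq2 : q ≠ -1) (ht : t ≤ n)
    (h : c * (qSym q (n + 1 - t) - qSym q⁻¹ (t + 1)) = q⁻¹ - q) :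
    c * qSym q (n - t) = q⁻¹ - 1 := by
  have hp : q ^ (n - t) * q ^ t = 1 := by rw [← pow_add, Nat.sub_add_cancel ht, hqn]
  have hQt : q⁻¹ ^ t = q ^ (n - t) := by rw [inv_pow]; exact inv_eq_of_mul_eq_one_left hp
  have g1 : (q - 1) * qSym q (n + 1 - t) = q * q ^ (n - t) - 1 := by
    rw [qSym, mul_geom_sum, show n + 1 - t = n - t + 1 by omega, pow_succ']
  have g2 : (q⁻¹ - 1) * qSym q⁻¹ (t + 1) = q⁻¹ * q ^ (n - t) - 1 := by
    rw [qSym, mul_geom_sum, pow_succ', hQt]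
  have g3 : (q - 1) * qSym q (n - t) = q ^ (n - t) - 1 := mul_geom_sum _ _
  have hQq : q⁻¹ - q ≠ 0 := by
    have hq0 : q ≠ 0 := by rintro rfl; simp [zero_pow hn] at hqn
    intro h0
    have hsq : (q - 1) * (q + 1) = 0 := by
      linear_combination (-q) * h0 + mul_inv_cancel₀ hq0
    rcases mul_eq_zero.mp hsq with h1 | h1
    · exact hq1 (sub_eq_zero.mp h1)
    · exact hq2 (eq_neg_of_add_eq_zero_left h1)
  have key : (q - 1) * (q⁻¹ - q) * (c * qSym q (n - t) - (q⁻¹ - 1)) = 0 := by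
    linear_combination (q - 1) * (q⁻¹ - 1) * h - c * (q⁻¹ - 1) * g1 + c * (q - 1) * g2
      + c * (q⁻¹ - q) * g3
  have := (mul_eq_zero.mp key).resolve_left (mul_ne_zero (sub_ne_zero.mpr hq1) hQq)
  exact sub_eq_zero.mp this

section CyclicAlgebra

variable {k A : Type*} [Field k] [CommRing A] [Algebra k A] {n : ℕ} {u : A}

theorem not_isNilpotent_of_basis_eq_pow (hn : 0 < n) (b : Module.Basis (Fin n) k A)
    (hb : ∀ i : Fin n, b i = u ^ (i : ℕ)) (hu : u ^ n = 1) : ¬ IsNilpotent u := by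
  rintro ⟨s, hs⟩
  rw [pow_eq_pow_mod s hu, ← hb ⟨s % n, Nat.mod_lt _ hn⟩] at hs
  exact b.ne_zero _ hs

theorem smul_pow_left_injective (hnil : ¬ IsNilpotent u) (s : ℕ) :
    Function.Injective fun c : k => c • u ^ s :=
  smul_left_injective k fun h => hnil ⟨s, h⟩

theorem exists_eq_smul_pow_of_apply_eq_pow_smul (hn : 0 < n) {ζ : k}
    (hζ : IsPrimitiveRoot ζ n) (b : Module.Basis (Fin n) k A)
    (hb : ∀ i : Fin n, b i = u ^ (i : ℕ)) (hu : u ^ n = 1) {σ : A ≃ₐ[k] A}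
    (hσu : σ u = ζ • u) {v : A} {j : ℕ} (hv : σ v = ζ ^ j • v) : ∃ c : k, v = c • u ^ j := by
  have hL : ∀ i : Fin n, σ.toLinearMap (b i) = ζ ^ (i : ℕ) • b i := fun i => by
    simp [hb, hσu, smul_pow]
  have hg : Function.Injective fun i : Fin n => ζ ^ (i : ℕ) := fun i i' h =>
    Fin.ext (hζ.pow_inj i.isLt i'.isLt h)
  have := b.eq_repr_smul_of_apply_eq_smul hg hL (i₀ := ⟨j % n, Nat.mod_lt _ hn⟩)
    (v := v) (by simpa [← pow_eq_pow_mod j hζ.pow_eq_one] using hv)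
  exact ⟨_, by rwa [hb, ← pow_eq_pow_mod j hu] at this⟩

theorem exists_apply_eq_pow_smul_of_commute (hn : 0 < n) {ζ : k} (hζ : IsPrimitiveRoot ζ n)
    (b : Module.Basis (Fin n) k A) (hb : ∀ i : Fin n, b i = u ^ (i : ℕ)) (hu : u ^ n = 1)
    {σ τ : A ≃ₐ[k] A} (hσu : σ u = ζ • u) (hστ : σ * τ = τ * σ) (hτn : τ ^ n = 1) :
    ∃ d < n, τ u = ζ ^ d • u := by
  have hστu : σ (τ u) = ζ ^ 1 • τ u := by
    rw [← AlgEquiv.mul_apply, hστ, AlgEquiv.mul_apply, hσu, map_smul, pow_one]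
  obtain ⟨c, hc⟩ := exists_eq_smul_pow_of_apply_eq_pow_smul hn hζ b hb hu hσu hστu
  rw [pow_one] at hc
  have hcn : c ^ n = 1 := by
    apply smul_pow_left_injective (not_isNilpotent_of_basis_eq_pow hn b hb hu) 1
    simp only [pow_one, one_smul]
    rw [← AlgEquiv.pow_apply_of_apply_eq_smul τ hc, hτn, AlgEquiv.one_apply]
  have : NeZero n := ⟨hn.ne'⟩
  obtain ⟨d, hd, rfl⟩ := hζ.eq_pow_of_pow_eq_one hcn
  exact ⟨d, hd, hc⟩

theorem mul_pow_eq_one_of_map_apply_eq_smul (hnil : ¬ IsNilpotent u) {τ : A ≃ₐ[k] A}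
    {δ : A →ₗ[k] A} {c q γ : k} {t : ℕ} (hγ : γ ≠ 0) (hτu : τ u = c • u)
    (hδu : δ u = γ • u ^ (t + 1)) (hδτ : δ (τ u) = q • τ (δ u)) : q * c ^ t = 1 := by
  have hc : c ≠ 0 := by
    rintro rfl
    exact hnil ⟨1, by simpa using hτu⟩
  have : (c * γ) • u ^ (t + 1) = (q * γ * c ^ (t + 1)) • u ^ (t + 1) := by
    rw [← smul_smul, ← hδu, ← map_smul, ← hτu, hδτ, hδu, map_smul, map_pow, hτu, smul_pow,
      smul_smul, smul_smul, mul_assoc]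
  have h := smul_pow_left_injective hnil _ this
  apply mul_left_cancel₀ (mul_ne_zero hc hγ)
  linear_combination -h

theorem exists_apply_eq_smul_pow_of_comp_eq_smul (hn : 0 < n) {ζ : k}
    (hζ : IsPrimitiveRoot ζ n) (b : Module.Basis (Fin n) k A)
    (hb : ∀ i : Fin n, b i = u ^ (i : ℕ)) (hu : u ^ n = 1) {σ : A ≃ₐ[k] A} {D : A →ₗ[k] A}
    {t : ℕ} (ht : t ≤ n) (hσu : σ u = ζ • u) (hσD : σ (D u) = ζ⁻¹ ^ t • D (σ u)) :
    ∃ c : k, D u = c • u ^ (n + 1 - t) := by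
  have hζ0 : ζ ≠ 0 := hζ.ne_zero hn.ne'
  have hpow : ζ ^ (n + 1 - t) = ζ⁻¹ ^ t * ζ := by
    rw [pow_sub₀ ζ hζ0 (by omega), pow_succ, hζ.pow_eq_one, one_mul, inv_pow, mul_comm]
  apply exists_eq_smul_pow_of_apply_eq_pow_smul hn hζ b hb hu hσu
  rw [hσD, hσu, map_smul, smul_smul, hpow]

theorem mul_qSym_sub_qSym_eq_of_commutator {D₁ D₂ : A →ₗ[k] A} {φ₁ φ₂ : A → A}
    (h₁ : ∀ a c, D₁ (a * c) = φ₁ a * D₁ c + D₁ a * c)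
    (h₂ : ∀ a c, D₂ (a * c) = a * D₂ c + D₂ a * φ₂ c) {q Q γ δ₀ : k} {t : ℕ}
    (hφ₁ : φ₁ u = q • u) (hφ₂ : φ₂ u = Q • u) (hD₁ : D₁ u = γ • u ^ (t + 1))
    (hD₂ : D₂ u = δ₀ • u ^ (n + 1 - t)) (hu : u ^ n = 1) (hnil : ¬ IsNilpotent u) (ht : t ≤ n)
    (hcomm : D₁ (D₂ u) - D₂ (D₁ u) = φ₂ u - φ₁ u) :
    γ * δ₀ * (qSym q (n + 1 - t) - qSym Q (t + 1)) = Q - q := by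
  have h₂' : ∀ a c, D₂ (a * c) = φ₂ a * D₂ c + D₂ a * c := fun a c => by
    rw [mul_comm, h₂, add_comm, mul_comm c, mul_comm (D₂ c)]
  have hu1 : u ^ (n + 1) = u := by rw [pow_succ, hu, one_mul]
  have e₁ : D₁ (D₂ u) = (δ₀ * qSym q (n + 1 - t) * γ) • u := by
    rw [hD₂, map_smul, show n + 1 - t = n - t + 1 by omega,
      map_pow_succ_of_map_mul_eq h₁ hφ₁, hD₁, mul_smul_comm, ← pow_add,
      show n - t + (t + 1) = n + 1 by omega, hu1, smul_smul, smul_smul]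
  have e₂ : D₂ (D₁ u) = (γ * qSym Q (t + 1) * δ₀) • u := by
    rw [hD₁, map_smul, map_pow_succ_of_map_mul_eq h₂' hφ₂, hD₂, mul_smul_comm, ← pow_add,
      show t + (n + 1 - t) = n + 1 by omega, hu1, smul_smul, smul_smul]
  rw [e₁, e₂, hφ₂, hφ₁, ← sub_smul, ← sub_smul, ← pow_one u] at hcomm
  linear_combination smul_pow_left_injective hnil 1 hcomm

end CyclicAlgebra

theorem stmt_10_general (k : Type*) [Field k]
    (n : ℕ) (hn : 0 < n) (ζ : k) (hζ : IsPrimitiveRoot ζ n)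
    (m t : ℕ) (hm0 : 0 < m) (hmn : m ∣ n) (htn : t ∣ n)
    (hnmt : ¬ n ∣ m * t)
    (A : Type*) [CommRing A] [Algebra k A]
    (u : A) (b : Module.Basis (Fin n) k A) (hb : ∀ i : Fin n, b i = u ^ (i : ℕ))
    (hu : u ^ n = 1)
    (σ : A ≃ₐ[k] A) (δ : A →ₗ[k] A)
    (hact : IsHAction n m t (n / Nat.gcd n (m * t)) ζ σ δ)
    (γ : k) (hγ : γ ≠ 0) (hσu : σ u = ζ • u) (hδu : δ u = γ • u ^ (t + 1)) :
    ∀ (τ : A ≃ₐ[k] A) (δ' : A →ₗ[k] A),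
      IsDHExtension n m t (n / Nat.gcd n (m * t)) ζ σ δ τ δ' →
      ∃ d : ℕ, 0 < d ∧ d < n ∧ n ∣ (m + d * t) ∧
        ∃ δ₀ : k, τ u = ζ ^ d • u ∧ δ' u = δ₀ • u ^ (n + 1 - t) ∧
          (2 * m ≠ n → γ * δ₀ * qSym (ζ ^ m) (n - t) = ζ⁻¹ ^ m - 1) := by
  rintro τ δ' ⟨hτn, -, hδ'mul, -, -, hστ, hδτ, hσδ', hcomm⟩
  obtain ⟨-, -, hδmul, -, -⟩ := hact
  have hmlt : m < n := (Nat.le_of_dvd hn hmn).lt_of_ne fun h => hnmt (h ▸ dvd_mul_right m t)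
  have htle : t ≤ n := Nat.le_of_dvd hn htn
  have hnil := not_isNilpotent_of_basis_eq_pow hn b hb hu
  obtain ⟨d, hdn, hτu⟩ := exists_apply_eq_pow_smul_of_commute hn hζ b hb hu hσu hστ hτn
  have hmd : ζ ^ m * (ζ ^ d) ^ t = 1 := mul_pow_eq_one_of_map_apply_eq_smul hnil hγ hτu hδu
    (by simpa using LinearMap.congr_fun hδτ u)
  have hdvd : n ∣ m + d * t := by rwa [← hζ.pow_eq_one_iff_dvd, pow_add, pow_mul]
  have hd0 : 0 < d := Nat.pos_of_ne_zero fun hd =>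
    absurd (Nat.le_of_dvd hm0 (by simpa [hd] using hdvd)) hmlt.not_ge
  obtain ⟨δ₀, hδ'u⟩ := exists_apply_eq_smul_pow_of_comp_eq_smul hn hζ b hb hu htle hσu
    (by simpa using LinearMap.congr_fun hσδ' u)
  refine ⟨d, hd0, hdn, hdvd, δ₀, hτu, hδ'u, fun h2m => ?_⟩
  have hτt : (τ ^ t) u = (ζ ^ m)⁻¹ • u := by
    rw [AlgEquiv.pow_apply_of_apply_eq_smul τ hτu, eq_inv_of_mul_eq_one_right hmd]
  rw [inv_pow]
  have hqn : (ζ ^ m) ^ n = 1 := by rw [← pow_mul, mul_comm, pow_mul, hζ.pow_eq_one, one_pow]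
  refine mul_qSym_sub_eq_inv_sub_one hn.ne' hqn (hζ.pow_ne_one_of_pos_of_lt hm0.ne' hmlt)
    (hζ.pow_ne_neg_one hm0 hmlt h2m) htle ?_
  exact mul_qSym_sub_qSym_eq_of_commutator hδmul hδ'mul
    (AlgEquiv.pow_apply_of_apply_eq_smul σ hσu m) hτt hδu hδ'u hu hnil htle
    (by simpa using LinearMap.congr_fun hcomm u)

/-- Necessity part of Theorem 4.17: any extension of the `H_n(ζ,m,t)`-module-algebra
structure on `A = k[u]/(uⁿ - 1)` to `D(H_n(ζ,m,t))` has `τ(u) = ζ^d·u` with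
`m ≡ -dt (mod n)`, `0 < d < n`, and `δ'(u) = δ₀·u^(n+1-t)`; if `2m ≠ n`, then moreover
`γ·δ₀·(n-t)_{ζ^m} = ζ^{-m} - 1`. -/
theorem stmt_10 (k : Type*) [Field k] [IsAlgClosed k] [CharZero k]
    (n : ℕ) (hn : 0 < n) (ζ : k) (hζ : IsPrimitiveRoot ζ n)
    (m t : ℕ) (hm0 : 0 < m) (ht0 : 0 < t) (hmn : m ∣ n) (htn : t ∣ n)
    (hnmt : ¬ n ∣ m * t) (hcop : Nat.gcd t (n / m) = 1)
    (A : Type*) [CommRing A] [Algebra k A]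
    (u : A) (b : Module.Basis (Fin n) k A) (hb : ∀ i : Fin n, b i = u ^ (i : ℕ))
    (hu : u ^ n = 1)
    (σ : A ≃ₐ[k] A) (δ : A →ₗ[k] A)
    (hact : IsHAction n m t (n / Nat.gcd n (m * t)) ζ σ δ)
    (γ : k) (hγ : γ ≠ 0) (hσu : σ u = ζ • u) (hδu : δ u = γ • u ^ (t + 1)) :
    ∀ (τ : A ≃ₐ[k] A) (δ' : A →ₗ[k] A),
      IsDHExtension n m t (n / Nat.gcd n (m * t)) ζ σ δ τ δ' →
      ∃ d : ℕ, 0 < d ∧ d < n ∧ n ∣ (m + d * t) ∧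
        ∃ δ₀ : k, τ u = ζ ^ d • u ∧ δ' u = δ₀ • u ^ (n + 1 - t) ∧
          (2 * m ≠ n → γ * δ₀ * qSym (ζ ^ m) (n - t) = ζ⁻¹ ^ m - 1) :=
  stmt_10_general k n hn ζ hζ m t hm0 hmn htn hnmt A u b hb hu σ δ hact γ hγ hσu hδu
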